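/- Let D be a weighted ADF. Then every model of D and every preferred interpretation of D is complete, and every complete interpretation of D is admissible. If moreover the information ordering of D is flat, then every model of D is preferred. -/
import Mathlib


/-- A weighted abstract dialectical framework over statements `S` and truth
values `Vu = V ∪ {u}`, where `u` is the designated least "undefined" value and
`V` consists of the elements of `Vu` different from `u`. -/
structure WADF (S : Type) (Vu : Type) [PartialOrder Vu] where
  /-- the undefined truth value -/
  u : Vu
  /-- `u` is the least element of the information ordering -/
  u_least : ∀ x : Vu, u ≤ x
  /-- greatest lower bound operator on sets of truth values -/
  glb : Set Vu → Vu
  /-- `glb` is a greatest lower bound for every nonempty set -/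
  glb_spec : ∀ X : Set Vu, X.Nonempty → IsGLB X (glb X)
  /-- every chain of truth values has a least upper bound -/
  lub_chain : ∀ X : Set Vu, IsChain (· ≤ ·) X → ∃ y : Vu, IsLUB X y
  /-- acceptance conditions -/
  C : S → (S → Vu) → Vu
  /-- acceptance conditions map total interpretations to values in `V` -/
  C_val : ∀ (s : S) (w : S → Vu), (∀ t, w t ≠ u) → C s w ≠ u
  /-- every partial interpretation has at least one completion -/
  compl_ne : ∀ v : S → Vu, ∃ w : S → Vu, (∀ t, w t ≠ u) ∧ v ≤ w

namespace WADF

variable {S Vu : Type} [PartialOrder Vu] (D : WADF S Vu)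

/-- a total interpretation maps every statement into `V` -/
def IsTotal (w : S → Vu) : Prop := ∀ t, w t ≠ D.u

/-- the set of completions of a partial interpretation -/
def completions (v : S → Vu) : Set (S → Vu) := {w | D.IsTotal w ∧ v ≤ w}

/-- the characteristic operator -/
def Γ (v : S → Vu) : S → Vu :=
  fun s => D.glb {x : Vu | ∃ w ∈ D.completions v, D.C s w = x}

/-- admissible interpretations -/
def Admissible (v : S → Vu) : Prop := v ≤ D.Γ v

/-- complete interpretations (fixpoints of the characteristic operator) -/
def Complete (v : S → Vu) : Prop := D.Γ v = v

/-- preferred interpretations: maximal admissible ones -/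
def Preferred (v : S → Vu) : Prop :=
  D.Admissible v ∧ ∀ w : S → Vu, D.Admissible w → v ≤ w → w = v

/-- models: total complete interpretations -/
def IsModel (v : S → Vu) : Prop := D.IsTotal v ∧ D.Complete v

/-- the information ordering is flat -/
def Flat : Prop := ∀ x y : Vu, x ≤ y ↔ x = D.u ∨ x = y

end WADF

namespace WADF

variable {S Vu : Type} [PartialOrder Vu] (D : WADF S Vu)

lemma completions_nonempty (v : S → Vu) : (D.completions v).Nonempty := by
  obtain ⟨w, hw, hvw⟩ := D.compl_ne v
  exact ⟨w, hw, hvw⟩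

lemma gamma_mono {v v' : S → Vu} (h : v ≤ v') : D.Γ v ≤ D.Γ v' := by
  intro s
  have hsub : {x : Vu | ∃ w ∈ D.completions v', D.C s w = x} ⊆
      {x : Vu | ∃ w ∈ D.completions v, D.C s w = x} := by
    rintro x ⟨w, ⟨hw, hvw⟩, rfl⟩
    exact ⟨w, ⟨hw, le_trans h hvw⟩, rfl⟩
  obtain ⟨w, hw⟩ := D.completions_nonempty v'
  have hne' : {x : Vu | ∃ w ∈ D.completions v', D.C s w = x}.Nonempty :=
    ⟨D.C s w, w, hw, rfl⟩
  have hne : {x : Vu | ∃ w ∈ D.completions v, D.C s w = x}.Nonempty :=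
    hne'.mono hsub
  have h1 := D.glb_spec _ hne
  have h2 := D.glb_spec _ hne'
  exact h2.2 (fun x hx => h1.1 (hsub hx))

end WADF

/-- models and preferred interpretations are complete, complete
interpretations are admissible, and for flat information orderings every model
is preferred. -/
theorem wadf_semantics_relationships {S Vu : Type} [PartialOrder Vu]
    (D : WADF S Vu) :
    (∀ v : S → Vu, D.IsModel v → D.Complete v) ∧
    (∀ v : S → Vu, D.Preferred v → D.Complete v) ∧
    (∀ v : S → Vu, D.Complete v → D.Admissible v) ∧
    (D.Flat → ∀ v : S → Vu, D.IsModel v → D.Preferred v) := by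
  have hCA : ∀ v : S → Vu, D.Complete v → D.Admissible v := fun v hv => le_of_eq hv.symm
  refine ⟨fun v hv => hv.2, ?_, hCA, ?_⟩
  · rintro v ⟨hadm, hmax⟩
    have hadm' : D.Admissible (D.Γ v) := D.gamma_mono hadm
    exact hmax _ hadm' hadm
  · rintro hflat v ⟨htot, hcomp⟩
    refine ⟨hCA v hcomp, fun w _ hvw => ?_⟩
    funext s
    rcases (hflat (v s) (w s)).1 (hvw s) with h | h
    · exact absurd h (htot s)
    · exact h.symm
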